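/- For i ∈ {1,2}, let φ_i(z) = -(1/2)σ_i² z² - μ̄_i z + (λ_i + δ), where σ_1, σ_2 > 0, λ_1, λ_2 > 0, δ > 0, and μ̄_1, μ̄_2 ∈ ℝ. Then the quartic equation φ_1(z)·φ_2(z) = λ_1 λ_2 has four real roots z_1 < z_2 < 0 < z_3 < z_4. -/
import Mathlib

set_option maxHeartbeats 1000000 in
/-- Lemma 4.2: the quartic equation `φ₁(z) φ₂(z) = lam₁ lam₂`, with
`φᵢ(z) = -(1/2) σᵢ² z² - μ̄ᵢ z + (λᵢ + δ)`, has four real roots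
`z₁ < z₂ < 0 < z₃ < z₄`. -/
theorem stmt_3 (σ₁ σ₂ lam₁ lam₂ δ : ℝ) (μ₁ μ₂ : ℝ)
    (hσ₁ : 0 < σ₁) (hσ₂ : 0 < σ₂) (hlam₁ : 0 < lam₁) (hlam₂ : 0 < lam₂) (hδ : 0 < δ) :
    ∃ z₁ z₂ z₃ z₄ : ℝ, z₁ < z₂ ∧ z₂ < 0 ∧ 0 < z₃ ∧ z₃ < z₄ ∧
      (∀ z ∈ ({z₁, z₂, z₃, z₄} : Set ℝ),
        (-(1/2) * σ₁^2 * z^2 - μ₁ * z + (lam₁ + δ)) *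
          (-(1/2) * σ₂^2 * z^2 - μ₂ * z + (lam₂ + δ)) = lam₁ * lam₂) := by
  set g : ℝ → ℝ := fun z => (-(1/2) * σ₁^2 * z^2 - μ₁ * z + (lam₁ + δ)) *
      (-(1/2) * σ₂^2 * z^2 - μ₂ * z + (lam₂ + δ)) with hg
  have hcont : Continuous g := by
    apply Continuous.mul <;> continuity
  have hσ₁2 : (0:ℝ) < σ₁^2 := by positivity
  have hσ₂2 : (0:ℝ) < σ₂^2 := by positivity
  have habs1 : μ₁ ≤ |μ₁| := le_abs_self μ₁
  have habs1' : -|μ₁| ≤ μ₁ := neg_abs_le μ₁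
  have habs2 : μ₂ ≤ |μ₂| := le_abs_self μ₂
  have habs2' : -|μ₂| ≤ μ₂ := neg_abs_le μ₂
  have hDpos : 0 < μ₁^2 + 2*σ₁^2*(lam₁+δ) := by positivity
  set s := Real.sqrt (μ₁^2 + 2*σ₁^2*(lam₁+δ)) with hsdef
  have hs0 : 0 ≤ s := Real.sqrt_nonneg _
  have hs2 : s^2 = μ₁^2 + 2*σ₁^2*(lam₁+δ) := Real.sq_sqrt hDpos.le
  have hsgt : |μ₁| < s := by
    rw [hsdef, show |μ₁| = Real.sqrt (μ₁^2) by rw [Real.sqrt_sq_eq_abs]]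
    apply Real.sqrt_lt_sqrt (by positivity)
    have := mul_pos hσ₁2 (show (0:ℝ) < lam₁ + δ by linarith)
    linarith
  set rp := (-μ₁ + s)/σ₁^2 with hrp
  set rm := (-μ₁ - s)/σ₁^2 with hrm
  have keyp : σ₁^2 * rp = -μ₁ + s := by rw [hrp]; field_simp
  have keym : σ₁^2 * rm = -μ₁ - s := by rw [hrm]; field_simp
  have hrp_pos : 0 < rp := by rw [hrp]; apply div_pos _ hσ₁2; linarith
  have hrm_neg : rm < 0 := by
    rw [hrm]; apply div_neg_of_neg_of_pos _ hσ₁2; linarith [abs_nonneg μ₁]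
  set K := lam₁ + lam₂ + δ + 1 with hK
  have hKpos : 0 < K := by rw [hK]; positivity
  have hK1 : lam₁ < K := by rw [hK]; linarith
  have hK2 : lam₂ < K := by rw [hK]; linarith
  set M := 1 + (|μ₁| + lam₁ + δ + K)/(σ₁^2/2) + (|μ₂| + lam₂ + δ + K)/(σ₂^2/2)
      + (|μ₁| + s)/σ₁^2 with hM
  have h1 : (0:ℝ) ≤ (|μ₁| + lam₁ + δ + K)/(σ₁^2/2) := by positivity
  have h2 : (0:ℝ) ≤ (|μ₂| + lam₂ + δ + K)/(σ₂^2/2) := by positivity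
  have h3 : (0:ℝ) ≤ (|μ₁| + s)/σ₁^2 := by positivity
  have hM1 : 1 ≤ M := by rw [hM]; linarith
  have hMpos : (0:ℝ) < M := by linarith
  have hMrp : rp < M := by
    have h' : (-μ₁ + s)/σ₁^2 ≤ (|μ₁| + s)/σ₁^2 := by gcongr; linarith
    rw [hM]; rw [hrp] at *; linarith
  have hMrm : -M < rm := by
    have h' : (-(|μ₁| + s))/σ₁^2 ≤ (-μ₁ - s)/σ₁^2 := by gcongr; linarith
    have h'' : -((|μ₁| + s)/σ₁^2) = (-(|μ₁| + s))/σ₁^2 := by ring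
    rw [hM]; rw [hrm] at *; linarith
  have hb1 : |μ₁| + lam₁ + δ + K ≤ (σ₁^2/2) * M := by
    have hle : (|μ₁| + lam₁ + δ + K)/(σ₁^2/2) ≤ M := by rw [hM]; linarith
    calc |μ₁| + lam₁ + δ + K = (|μ₁| + lam₁ + δ + K)/(σ₁^2/2) * (σ₁^2/2) := by
          field_simp
      _ ≤ M * (σ₁^2/2) := by apply mul_le_mul_of_nonneg_right hle; positivity
      _ = (σ₁^2/2) * M := by ring
  have hb2 : |μ₂| + lam₂ + δ + K ≤ (σ₂^2/2) * M := by
    have hle : (|μ₂| + lam₂ + δ + K)/(σ₂^2/2) ≤ M := by rw [hM]; linarith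
    calc |μ₂| + lam₂ + δ + K = (|μ₂| + lam₂ + δ + K)/(σ₂^2/2) * (σ₂^2/2) := by
          field_simp
      _ ≤ M * (σ₂^2/2) := by apply mul_le_mul_of_nonneg_right hle; positivity
      _ = (σ₂^2/2) * M := by ring
  clear_value g s rp rm K M
  clear hsdef hrp hrm hK hM h1 h2 h3
  -- the two roots of φ₁
  have hφrp : -(1/2) * σ₁^2 * rp^2 - μ₁ * rp + (lam₁ + δ) = 0 := by
    have h0 : σ₁^2 * (-(1/2) * σ₁^2 * rp^2 - μ₁ * rp + (lam₁ + δ)) = 0 := by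
      linear_combination (-(1/2)*σ₁^2*rp - (1/2)*(μ₁+s)) * keyp + (-(1/2)) * hs2
    rcases mul_eq_zero.mp h0 with h | h
    · exact absurd h (ne_of_gt hσ₁2)
    · exact h
  have hφrm : -(1/2) * σ₁^2 * rm^2 - μ₁ * rm + (lam₁ + δ) = 0 := by
    have h0 : σ₁^2 * (-(1/2) * σ₁^2 * rm^2 - μ₁ * rm + (lam₁ + δ)) = 0 := by
      linear_combination (-(1/2)*σ₁^2*rm - (1/2)*(μ₁-s)) * keym + (-(1/2)) * hs2
    rcases mul_eq_zero.mp h0 with h | h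
    · exact absurd h (ne_of_gt hσ₁2)
    · exact h
  have hgrp : g rp = 0 := by rw [hg]; simp only; rw [hφrp]; ring
  have hgrm : g rm = 0 := by rw [hg]; simp only; rw [hφrm]; ring
  have hg0 : lam₁ * lam₂ < g 0 := by
    rw [hg]; simp only
    have t1 := mul_pos hlam₁ hδ
    have t2 := mul_pos hδ hlam₂
    have t3 := mul_pos hδ hδ
    linarith only [t1, t2, t3]
  -- bounds at ±M
  have hhb1 : (|μ₁| + lam₁ + δ + K) * M ≤ (σ₁^2/2) * M * M :=
    mul_le_mul_of_nonneg_right hb1 hMpos.le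
  have hhb2 : (|μ₂| + lam₂ + δ + K) * M ≤ (σ₂^2/2) * M * M :=
    mul_le_mul_of_nonneg_right hb2 hMpos.le
  have he1 : (0:ℝ) ≤ (lam₁ + δ + K) * (M - 1) := by
    apply mul_nonneg (by positivity); linarith
  have he2 : (0:ℝ) ≤ (lam₂ + δ + K) * (M - 1) := by
    apply mul_nonneg (by positivity); linarith
  have hmu1a : -|μ₁| * M ≤ μ₁ * M := mul_le_mul_of_nonneg_right habs1' hMpos.le
  have hmu1b : μ₁ * M ≤ |μ₁| * M := mul_le_mul_of_nonneg_right habs1 hMpos.le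
  have hmu2a : -|μ₂| * M ≤ μ₂ * M := mul_le_mul_of_nonneg_right habs2' hMpos.le
  have hmu2b : μ₂ * M ≤ |μ₂| * M := mul_le_mul_of_nonneg_right habs2 hMpos.le
  have hq1M : -(1/2) * σ₁^2 * M^2 - μ₁ * M + (lam₁ + δ) ≤ -K := by
    linarith only [hhb1, he1, hmu1a, hK1, hK2, hKpos]
  have hq2M : -(1/2) * σ₂^2 * M^2 - μ₂ * M + (lam₂ + δ) ≤ -K := by
    linarith only [hhb2, he2, hmu2a, hK1, hK2, hKpos]
  have hq1M' : -(1/2) * σ₁^2 * (-M)^2 - μ₁ * (-M) + (lam₁ + δ) ≤ -K := by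
    linarith only [hhb1, he1, hmu1b, hK1, hK2, hKpos]
  have hq2M' : -(1/2) * σ₂^2 * (-M)^2 - μ₂ * (-M) + (lam₂ + δ) ≤ -K := by
    linarith only [hhb2, he2, hmu2b, hK1, hK2, hKpos]
  have hllK : lam₁ * lam₂ < K * K := by
    have t1 : lam₁ * lam₂ < lam₁ * K := mul_lt_mul_of_pos_left hK2 hlam₁
    have t2 : lam₁ * K < K * K := mul_lt_mul_of_pos_right hK1 hKpos
    linarith
  have hgM : lam₁ * lam₂ < g M := by
    rw [hg]; simp only
    have P := mul_nonneg
      (by linarith : (0:ℝ) ≤ -K - (-(1/2) * σ₁^2 * M^2 - μ₁ * M + (lam₁ + δ)))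
      (by linarith : (0:ℝ) ≤ -K - (-(1/2) * σ₂^2 * M^2 - μ₂ * M + (lam₂ + δ)))
    have Q1 := mul_le_mul_of_nonneg_left hq1M hKpos.le
    have Q2 := mul_le_mul_of_nonneg_left hq2M hKpos.le
    linarith only [P, Q1, Q2, hllK]
  have hgM' : lam₁ * lam₂ < g (-M) := by
    rw [hg]; simp only
    have P := mul_nonneg
      (by linarith : (0:ℝ) ≤ -K - (-(1/2) * σ₁^2 * (-M)^2 - μ₁ * (-M) + (lam₁ + δ)))
      (by linarith : (0:ℝ) ≤ -K - (-(1/2) * σ₂^2 * (-M)^2 - μ₂ * (-M) + (lam₂ + δ)))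
    have Q1 := mul_le_mul_of_nonneg_left hq1M' hKpos.le
    have Q2 := mul_le_mul_of_nonneg_left hq2M' hKpos.le
    linarith only [P, Q1, Q2, hllK]
  have hll : 0 < lam₁ * lam₂ := by positivity
  obtain ⟨z₁, hz₁m, hz₁⟩ : ∃ x ∈ Set.Ioo (-M) rm, g x = lam₁ * lam₂ := by
    obtain ⟨x, hx, hx'⟩ := intermediate_value_Ioo' (le_of_lt hMrm) hcont.continuousOn
      (show lam₁ * lam₂ ∈ Set.Ioo (g rm) (g (-M)) by rw [hgrm]; exact ⟨hll, hgM'⟩)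
    exact ⟨x, hx, hx'⟩
  obtain ⟨z₂, hz₂m, hz₂⟩ : ∃ x ∈ Set.Ioo rm 0, g x = lam₁ * lam₂ := by
    obtain ⟨x, hx, hx'⟩ := intermediate_value_Ioo (le_of_lt hrm_neg) hcont.continuousOn
      (show lam₁ * lam₂ ∈ Set.Ioo (g rm) (g 0) by rw [hgrm]; exact ⟨hll, hg0⟩)
    exact ⟨x, hx, hx'⟩
  obtain ⟨z₃, hz₃m, hz₃⟩ : ∃ x ∈ Set.Ioo 0 rp, g x = lam₁ * lam₂ := by
    obtain ⟨x, hx, hx'⟩ := intermediate_value_Ioo' (le_of_lt hrp_pos) hcont.continuousOn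
      (show lam₁ * lam₂ ∈ Set.Ioo (g rp) (g 0) by rw [hgrp]; exact ⟨hll, hg0⟩)
    exact ⟨x, hx, hx'⟩
  obtain ⟨z₄, hz₄m, hz₄⟩ : ∃ x ∈ Set.Ioo rp M, g x = lam₁ * lam₂ := by
    obtain ⟨x, hx, hx'⟩ := intermediate_value_Ioo (le_of_lt hMrp) hcont.continuousOn
      (show lam₁ * lam₂ ∈ Set.Ioo (g rp) (g M) by rw [hgrp]; exact ⟨hll, hgM⟩)
    exact ⟨x, hx, hx'⟩
  refine ⟨z₁, z₂, z₃, z₄, lt_trans hz₁m.2 hz₂m.1, hz₂m.2, hz₃m.1,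
    lt_trans hz₃m.2 hz₄m.1, ?_⟩
  have hgz : ∀ z : ℝ, g z = (-(1/2) * σ₁^2 * z^2 - μ₁ * z + (lam₁ + δ)) *
      (-(1/2) * σ₂^2 * z^2 - μ₂ * z + (lam₂ + δ)) := fun z => by rw [hg]
  rintro z (rfl | rfl | rfl | rfl)
  · rw [← hgz]; exact hz₁
  · rw [← hgz]; exact hz₂
  · rw [← hgz]; exact hz₃
  · rw [← hgz]; exact hz₄
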